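/- With P, r₋, r₊, K₊, K₋ as above for a sub-extremal Reissner–Nordström–de Sitter black hole such that r²P(r) has three positive simple roots r₋ < r₊ < r_c, the ratio ρ = K₋/K₊ satisfies ρ > 1. -/
import Mathlib


/-- fundamental sub-extremality inequality `ρ = Km/Kp > 1` for a
sub-extremal Reissner–Nordström–de Sitter black hole with three positive simple
roots `rm < rp < r_c` of `r²P(r)`. -/
theorem stmt7 (Λ e M rm rp rc : ℝ) (hΛ : 0 < Λ) (he : e ≠ 0) (hM : 0 < M)
    (h0 : 0 < rm) (h1 : rm < rp) (h2 : rp < rc)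
    (Q : ℝ → ℝ) (hQ : Q = fun r => r^2 - 2*M*r + e^2 - (Λ/3)*r^4)
    (hQm : Q rm = 0) (hQp : Q rp = 0) (hQc : Q rc = 0)
    (hsm : deriv Q rm ≠ 0) (hsp : deriv Q rp ≠ 0) (hsc : deriv Q rc ≠ 0)
    (Kp Km : ℝ) (hKp : Kp = M/rp^2 - e^2/rp^3 - (Λ/3)*rp)
    (hKm : Km = -(M/rm^2 - e^2/rm^3 - (Λ/3)*rm))
    (hKp0 : 0 < Kp) (hKm0 : 0 < Km) :
    1 < Km / Kp := by
  have hrm0 : (0:ℝ) < rm := h0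
  have hrp0 : (0:ℝ) < rp := lt_trans h0 h1
  have hrc0 : (0:ℝ) < rc := lt_trans hrp0 h2
  have hmp : rm ≠ rp := ne_of_lt h1
  have hpc : rp ≠ rc := ne_of_lt h2
  have hmc : rm ≠ rc := ne_of_lt (lt_trans h1 h2)
  have Em : rm^2 - 2*M*rm + e^2 - (Λ/3)*rm^4 = 0 := by rw [hQ] at hQm; exact hQm
  have Ep : rp^2 - 2*M*rp + e^2 - (Λ/3)*rp^4 = 0 := by rw [hQ] at hQp; exact hQp
  have Ec : rc^2 - 2*M*rc + e^2 - (Λ/3)*rc^4 = 0 := by rw [hQ] at hQc; exact hQc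
  -- pairwise divided differences
  have h12 : (rm+rp) - 2*M - (Λ/3)*(rm+rp)*(rm^2+rp^2) = 0 := by
    have key : (rm - rp) * ((rm+rp) - 2*M - (Λ/3)*(rm+rp)*(rm^2+rp^2)) = 0 := by
      linear_combination Em - Ep
    rcases mul_eq_zero.mp key with h | h
    · exact absurd (sub_eq_zero.mp h) hmp
    · exact h
  have h23 : (rp+rc) - 2*M - (Λ/3)*(rp+rc)*(rp^2+rc^2) = 0 := by
    have key : (rp - rc) * ((rp+rc) - 2*M - (Λ/3)*(rp+rc)*(rp^2+rc^2)) = 0 := by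
      linear_combination Ep - Ec
    rcases mul_eq_zero.mp key with h | h
    · exact absurd (sub_eq_zero.mp h) hpc
    · exact h
  have hS : 0 < rm^2+rp^2+rc^2+rm*rp+rm*rc+rp*rc := by positivity
  have hL : (Λ/3)*(rm^2+rp^2+rc^2+rm*rp+rm*rc+rp*rc) = 1 := by
    have key : (rc - rm) * ((Λ/3)*(rm^2+rp^2+rc^2+rm*rp+rm*rc+rp*rc) - 1) = 0 := by
      linear_combination h12 - h23
    rcases mul_eq_zero.mp key with h | h
    · exact absurd (sub_eq_zero.mp h).symm hmc
    · linarith [sub_eq_zero.mp h]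
  have hM2 : 2*M*(rm^2+rp^2+rc^2+rm*rp+rm*rc+rp*rc) = (rm+rp)*(rm+rc)*(rp+rc) := by
    linear_combination (-(rm^2+rp^2+rc^2+rm*rp+rm*rc+rp*rc))*h12 - (rm+rp)*(rm^2+rp^2)*hL
  have hE : e^2*(rm^2+rp^2+rc^2+rm*rp+rm*rc+rp*rc) = rm*rp*rc*(rm+rp+rc) := by
    linear_combination (rm^2+rp^2+rc^2+rm*rp+rm*rc+rp*rc)*Em + rm^4*hL + rm*hM2
  have hKp3 : Kp * rp^3 = M*rp - e^2 - (Λ/3)*rp^4 := by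
    rw [hKp]; field_simp
  have hKm3 : Km * rm^3 = e^2 + (Λ/3)*rm^4 - M*rm := by
    rw [hKm]; field_simp; ring
  have hA2 : 2*(Kp*rp^3)*(rm^2+rp^2+rc^2+rm*rp+rm*rc+rp*rc) = rp*(rp+(rm+rp+rc))*(rp-rm)*(rc-rp) := by
    linear_combination 2*(rm^2+rp^2+rc^2+rm*rp+rm*rc+rp*rc)*hKp3 + rp*hM2 - 2*hE - 2*rp^4*hL
  have hB2 : 2*(Km*rm^3)*(rm^2+rp^2+rc^2+rm*rp+rm*rc+rp*rc) = rm*(rm+(rm+rp+rc))*(rp-rm)*(rc-rm) := by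
    linear_combination 2*(rm^2+rp^2+rc^2+rm*rp+rm*rc+rp*rc)*hKm3 - rm*hM2 + 2*hE + 2*rm^4*hL
  -- key polynomial inequality
  have hkey : rm^2*((rp+(rm+rp+rc))*(rc-rp)) < rp^2*((rm+(rm+rp+rc))*(rc-rm)) := by
    have t1 : 0 < ((rm+(rm+rp+rc))*rp) * (rc*(rp-rm)) :=
      mul_pos (mul_pos (by linarith) hrp0) (mul_pos hrc0 (by linarith))
    have t2 : 0 < ((rc-rp)*rm) * ((rm+rp+rc)*(rp-rm)) :=
      mul_pos (mul_pos (by linarith) hrm0) (mul_pos (by linarith) (by linarith))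
    have hid : rp^2*((rm+(rm+rp+rc))*(rc-rm)) - rm^2*((rp+(rm+rp+rc))*(rc-rp))
        = ((rm+(rm+rp+rc))*rp) * (rc*(rp-rm)) + ((rc-rp)*rm) * ((rm+rp+rc)*(rp-rm)) := by
      ring
    linarith
  have hpos : 0 < 2*rm^3*rp^3*(rm^2+rp^2+rc^2+rm*rp+rm*rc+rp*rc) := by positivity
  have hmul : Kp * (2*rm^3*rp^3*(rm^2+rp^2+rc^2+rm*rp+rm*rc+rp*rc)) < Km * (2*rm^3*rp^3*(rm^2+rp^2+rc^2+rm*rp+rm*rc+rp*rc)) := by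
    have e1 : Kp * (2*rm^3*rp^3*(rm^2+rp^2+rc^2+rm*rp+rm*rc+rp*rc)) = rm^3*(rp*(rp+(rm+rp+rc))*(rp-rm)*(rc-rp)) := by
      linear_combination rm^3*hA2
    have e2 : Km * (2*rm^3*rp^3*(rm^2+rp^2+rc^2+rm*rp+rm*rc+rp*rc)) = rp^3*(rm*(rm+(rm+rp+rc))*(rp-rm)*(rc-rm)) := by
      linear_combination rp^3*hB2
    rw [e1, e2]
    have hw : 0 < rm*rp*(rp-rm) := mul_pos (mul_pos hrm0 hrp0) (by linarith)
    have := mul_lt_mul_of_pos_left hkey hw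
    linarith [this]
  have hlt : Kp < Km := lt_of_mul_lt_mul_right hmul (le_of_lt hpos)
  rw [lt_div_iff₀ hKp0]
  linarith
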